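/- arXiv:2509.07217 — 2 statements merged into one kernel-verified Lean document; each statement's English description precedes it below -/
import Mathlib

section
/- Let p > 3 be a prime with p ≡ 2 (mod 3), and set k = (p²-1)/3. Then k is a positive integer and p divides the central binomial coefficient C(2k, k). -/
theorem stmt_5 (p : ℕ) (hp : p.Prime) (hp3 : 3 < p) (hmod : p % 3 = 2)
    (k : ℕ) (hk : k = (p ^ 2 - 1) / 3) :
    0 < k ∧ p ∣ Nat.choose (2 * k) k := by
  haveI : Fact p.Prime := ⟨hp⟩
  have hp5 : 5 ≤ p := by omega
  -- p^2 % 3 = 1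
  have hsq : p ^ 2 % 3 = 1 := by
    rw [Nat.pow_mod, hmod]
  have hk3 : 3 * k = p ^ 2 - 1 := by
    rw [hk]; omega
  set m := (p + 1) / 3 with hm_def
  have hm : 3 * m = p + 1 := by omega
  have hpp : 4 * p ≤ p ^ 2 := by nlinarith
  have hM : 3 * (m * p) = p ^ 2 + p := by
    calc 3 * (m * p) = (3 * m) * p := by ring
    _ = (p + 1) * p := by rw [hm]
    _ = p ^ 2 + p := by ring
  have hkm : k + m = m * p := by omega
  have hmle : 2 * m ≤ p ∧ 1 ≤ m := by omega
  have hA : (m - 1) * p + p = m * p := by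
    have : (m - 1) + 1 = m := by omega
    calc (m - 1) * p + p = ((m - 1) + 1) * p := by ring
    _ = m * p := by rw [this]
  have hB : (2 * m - 1) * p + p = 2 * (m * p) := by
    have : (2 * m - 1) + 1 = 2 * m := by omega
    calc (2 * m - 1) * p + p = ((2 * m - 1) + 1) * p := by ring
    _ = 2 * m * p := by rw [this]
    _ = 2 * (m * p) := by ring
  have hkeq : k = (p - m) + (m - 1) * p := by omega
  have h2keq : 2 * k = (p - 2 * m) + (2 * m - 1) * p := by omega
  have hkmod : k % p = p - m := by
    rw [hkeq, Nat.add_mul_mod_self_right, Nat.mod_eq_of_lt (by omega)]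
  have h2kmod : (2 * k) % p = p - 2 * m := by
    rw [h2keq, Nat.add_mul_mod_self_right, Nat.mod_eq_of_lt (by omega)]
  have hzero : Nat.choose ((2 * k) % p) (k % p) = 0 := by
    rw [hkmod, h2kmod]
    exact Nat.choose_eq_zero_of_lt (by omega)
  have h := Choose.choose_modEq_choose_mod_mul_choose_div_nat (p := p) (n := 2 * k) (k := k)
  rw [hzero, zero_mul] at h
  exact ⟨by omega, (Nat.modEq_zero_iff_dvd).mp h⟩
end

section
/- Let p > 2 be a prime and let e ≥ 1 and i be integers with 2 ≤ i ≤ e. Then p^(e+2-i) divides the binomial coefficient C(p^e, i). -/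
lemma aux_7 : ∀ k : ℕ, 1 ≤ k → k + 2 ≤ 3 ^ k := by
  intro k hk
  induction k with
  | zero => omega
  | succ n ih =>
    rcases Nat.eq_zero_or_pos n with rfl | hn
    · norm_num
    · have h1 := ih hn
      have h2 : 1 ≤ 3 ^ n := Nat.one_le_pow _ _ (by omega)
      have h3 : 3 ^ (n + 1) = 3 ^ n + 3 ^ n + 3 ^ n := by ring
      omega

theorem stmt_7 (p : ℕ) (hp : p.Prime) (hp2 : 2 < p) (e i : ℕ) (he : 1 ≤ e)
    (hi1 : 2 ≤ i) (hi2 : i ≤ e) :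
    p ^ (e + 2 - i) ∣ Nat.choose (p ^ e) i := by
  have hi0 : i ≠ 0 := by omega
  have hie : i ≤ p ^ e := le_trans hi2 (le_trans (Nat.lt_pow_self (n := e) hp.one_lt).le le_rfl)
  apply pow_dvd_of_le_emultiplicity
  rw [hp.emultiplicity_choose_prime_pow hie hi0]
  have hmult : multiplicity p i + 2 ≤ i := by
    set k := multiplicity p i with hk
    rcases Nat.eq_zero_or_pos k with h0 | h1
    · omega
    · have hdvd : p ^ k ∣ i := pow_multiplicity_dvd p i
      have : p ^ k ≤ i := Nat.le_of_dvd (by omega) hdvd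
      have h3 : 3 ^ k ≤ p ^ k := Nat.pow_le_pow_left hp2 k
      have := aux_7 k h1
      omega
  have : e + 2 - i ≤ e - multiplicity p i := by omega
  exact_mod_cast Nat.cast_le.mpr this
end
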